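/- A loopless matroid M has the property that its CI-structure [[M]] is a gaussoid (i.e. satisfies (SG), (Int), (Comp) and (WT)) if and only if M is isomorphic to a direct sum of copies of the uniform matroids U_{1,1} and U_{1,2}. -/

import Mathlib

open Finset

/-- A matroid on a finite ground set `E`, given by its rank function. -/
structure FinMatroid (α : Type*) [DecidableEq α] where
  E : Finset α
  r : Finset α → ℕ
  r_empty : r ∅ = 0
  r_le_card : ∀ ⦃A⦄, A ⊆ E → r A ≤ A.card
  r_mono : ∀ ⦃A B : Finset α⦄, A ⊆ B → B ⊆ E → r A ≤ r B
  r_submod : ∀ ⦃A B : Finset α⦄, A ⊆ E → B ⊆ E → r (A ∪ B) + r (A ∩ B) ≤ r A + r B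

namespace FinMatroid

variable {α : Type*} [DecidableEq α]

/-- A set is independent if it is subcardinal-tight for the rank function. -/
def Indep (M : FinMatroid α) (S : Finset α) : Prop := S ⊆ M.E ∧ M.r S = S.card

/-- A circuit is a minimal dependent set. -/
def Circuit (M : FinMatroid α) (C : Finset α) : Prop :=
  C ⊆ M.E ∧ M.r C < C.card ∧ ∀ S, S ⊂ C → M.r S = S.card

/-- `B` is a basis of `S` if it is a maximal independent subset of `S`. -/
def BasisOf (M : FinMatroid α) (B S : Finset α) : Prop :=
  B ⊆ S ∧ M.Indep B ∧ ∀ x ∈ S, x ∉ B → ¬ M.Indep (insert x B)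

/-- The conditional independence statement `(ij|K)` holds in `M`:
`r(iK) + r(jK) = r(ijK) + r(K)`. -/
def CI (M : FinMatroid α) (i j : α) (K : Finset α) : Prop :=
  M.r (insert i K) + M.r (insert j K) = M.r (insert i (insert j K)) + M.r K

/-- A matroid is loopless if every singleton of the ground set is independent. -/
def Loopless (M : FinMatroid α) : Prop := ∀ e ∈ M.E, M.r {e} = 1

end FinMatroid

/-- Well-formedness of a CI-statement `(ij|K)` on ground set `E`. -/
def wfCI {α : Type*} [DecidableEq α] (E : Finset α) (i j : α) (K : Finset α) : Prop :=
  i ∈ E ∧ j ∈ E ∧ i ≠ j ∧ i ∉ K ∧ j ∉ K ∧ K ⊆ E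

/-- The CI-structure `[[M]]` of a matroid, as a predicate on CI-statements. -/
def FinMatroid.ciOf {α : Type*} [DecidableEq α] (M : FinMatroid α) :
    α → α → Finset α → Prop :=
  fun i j K => wfCI M.E i j K ∧ M.CI i j K

/-- Well-formedness of the data `i, j, ℓ, K` of an inference-rule instance:
`i, j, ℓ` are pairwise distinct elements of `E` and `K ⊆ E` is disjoint
from them. -/
def wf3 {α : Type*} [DecidableEq α] (E : Finset α) (i j ℓ : α) (K : Finset α) : Prop :=
  i ∈ E ∧ j ∈ E ∧ ℓ ∈ E ∧ i ≠ j ∧ i ≠ ℓ ∧ j ≠ ℓ ∧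
    i ∉ K ∧ j ∉ K ∧ ℓ ∉ K ∧ K ⊆ E

/-- A CI-structure on `E`: a (symmetric) set of well-formed CI-statements. -/
def IsCIStructOn {α : Type*} [DecidableEq α] (E : Finset α)
    (G : α → α → Finset α → Prop) : Prop :=
  (∀ i j K, G i j K → wfCI E i j K) ∧ (∀ i j K, G i j K → G j i K)

/-- The axiom (MCI): `(ij|K) ∉ G` implies `(iℓ|jKL) ∈ G`. -/
def MCIax {α : Type*} [DecidableEq α] (E : Finset α)
    (G : α → α → Finset α → Prop) : Prop :=
  ∀ i j ℓ K L, wf3 E i j ℓ K →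
    L ⊆ E \ (insert i (insert j (insert ℓ K))) →
    ¬ G i j K → G i ℓ (insert j (K ∪ L))

/-- The semigraphoid axiom (SG): `(ij|K) ∈ G` and `(iℓ|jK) ∈ G` imply
`(iℓ|K) ∈ G` and `(ij|ℓK) ∈ G`. -/
def SGax {α : Type*} [DecidableEq α] (E : Finset α)
    (G : α → α → Finset α → Prop) : Prop :=
  ∀ i j ℓ K, wf3 E i j ℓ K →
    G i j K → G i ℓ (insert j K) → G i ℓ K ∧ G i j (insert ℓ K)

/-- The intersection axiom (Int). -/
def IntAx {α : Type*} [DecidableEq α] (E : Finset α)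
    (G : α → α → Finset α → Prop) : Prop :=
  ∀ i j k L, wf3 E i j k L →
    G i j (insert k L) → G i k (insert j L) → G i j L ∧ G i k L

/-- The composition axiom (Comp). -/
def CompAx {α : Type*} [DecidableEq α] (E : Finset α)
    (G : α → α → Finset α → Prop) : Prop :=
  ∀ i j k L, wf3 E i j k L →
    G i j L → G i k L → G i j (insert k L) ∧ G i k (insert j L)

/-- The weak transitivity axiom (WT). -/
def WTAx {α : Type*} [DecidableEq α] (E : Finset α)
    (G : α → α → Finset α → Prop) : Prop :=
  ∀ i j k L, wf3 E i j k L →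
    G i j L → G i j (insert k L) → G i k L ∨ G j k L

/-!
Call `i` and `j` parallel when `r {i, j} ≤ 1`; in a loopless matroid this is an equivalence
relation. (Comp) forces every circuit to have at most two elements: if `i` lies in the closure of
`S` but not in that of any `S \ {k}`, then for distinct `k, k' ∈ S` and `L = S \ {k, k'}` the
statements `(ik|L)` and `(ik'|L)` hold while `(ik|k'L)` fails. Hence `i` depends on `S` only
through an element parallel to it, and the rank of `S` is the number of parallel classes meeting
`S`. (Int) applied to three mutually parallel elements `x, y, z` would give `(xy|∅)`, which fails,
so the classes have at most two elements. Conversely, in a direct sum of copies of `U_{1,1}` and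
`U_{1,2}` the statement `(ij|K)` holds exactly when `i` and `j` lie in different blocks, whatever
`K` is, and a CI-structure of this shape satisfies all four axioms.
-/

lemma card_filter_inter_insert_nonempty {α : Type*} [DecidableEq α] {B : Finset (Finset α)}
    (hB : (B : Set (Finset α)).PairwiseDisjoint id) {b : Finset α} (hb : b ∈ B) {i : α}
    (hib : i ∈ b) (S : Finset α) :
    (B.filter fun c => (c ∩ insert i S).Nonempty).card =
      (B.filter fun c => (c ∩ S).Nonempty).card + if (b ∩ S).Nonempty then 0 else 1 := by
  have hfilter : B.filter (fun c => (c ∩ insert i S).Nonempty) =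
      insert b (B.filter fun c => (c ∩ S).Nonempty) := by
    ext c
    simp only [mem_filter, mem_insert]
    constructor
    · rintro ⟨hc, x, hx⟩
      rw [mem_inter, mem_insert] at hx
      rcases hx with ⟨hxc, rfl | hxS⟩
      · exact Or.inl (hB.elim_finset hc hb x hxc hib)
      · exact Or.inr ⟨hc, x, mem_inter.2 ⟨hxc, hxS⟩⟩
    · rintro (rfl | ⟨hc, x, hx⟩)
      · exact ⟨hb, i, mem_inter.2 ⟨hib, mem_insert_self i S⟩⟩
      · exact ⟨hc, x, inter_subset_inter_left (subset_insert i S) hx⟩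
  rw [hfilter, card_insert_eq_ite]
  by_cases h : (b ∩ S).Nonempty <;> simp [h, hb]

lemma gaussoid_of_iff_not_rel {α : Type*} [DecidableEq α] {E : Finset α}
    {G : α → α → Finset α → Prop} {R : α → α → Prop}
    (hR : ∀ i j k, R i k → R j k → R i j)
    (hG : ∀ i j K, wfCI E i j K → (G i j K ↔ ¬ R i j)) :
    SGax E G ∧ IntAx E G ∧ CompAx E G ∧ WTAx E G := by
  have key : ∀ i j k L, wf3 E i j k L →
      (G i j L ↔ ¬ R i j) ∧ (G i k L ↔ ¬ R i k) ∧ (G j k L ↔ ¬ R j k) ∧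
        (G i j (insert k L) ↔ ¬ R i j) ∧ (G i k (insert j L) ↔ ¬ R i k) := by
    rintro i j k L ⟨hi, hj, hk, hij, hik, hjk, hiL, hjL, hkL, hL⟩
    refine ⟨hG _ _ _ ⟨hi, hj, hij, hiL, hjL, hL⟩, hG _ _ _ ⟨hi, hk, hik, hiL, hkL, hL⟩,
      hG _ _ _ ⟨hj, hk, hjk, hjL, hkL, hL⟩, hG _ _ _ ?_, hG _ _ _ ?_⟩
    · exact ⟨hi, hj, hij, by simp [hik, hiL], by simp [hjk, hjL], insert_subset hk hL⟩
    · exact ⟨hi, hk, hik, by simp [hij, hiL], by simp [hjk.symm, hkL], insert_subset hj hL⟩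
  refine ⟨fun i j k L hw => ?_, fun i j k L hw => ?_, fun i j k L hw => ?_,
    fun i j k L hw => ?_⟩ <;>
  · obtain ⟨h₁, h₂, h₃, h₄, h₅⟩ := key i j k L hw
    simp only [h₁, h₂, h₃, h₄, h₅]
    have := hR i j k
    tauto

namespace FinMatroid

variable {α : Type*} [DecidableEq α] (M : FinMatroid α)

/-- `i` lies in the closure of `S`. -/
def Spans (S : Finset α) (i : α) : Prop := M.r (insert i S) = M.r S

def Parallel (i j : α) : Prop := i ∈ M.E ∧ j ∈ M.E ∧ M.r {i, j} ≤ 1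

instance (i j : α) : Decidable (M.Parallel i j) := inferInstanceAs (Decidable (_ ∧ _ ∧ _))

lemma r_le_r_insert {i : α} {A : Finset α} (hi : i ∈ M.E) (hA : A ⊆ M.E) :
    M.r A ≤ M.r (insert i A) :=
  M.r_mono (subset_insert i A) (insert_subset hi hA)

lemma r_insert_le_succ {i : α} {A : Finset α} (hi : i ∈ M.E) (hA : A ⊆ M.E) :
    M.r (insert i A) ≤ M.r A + 1 := by
  have hi' : {i} ⊆ M.E := singleton_subset_iff.2 hi
  have hsub := M.r_submod hi' hA
  have hle : M.r {i} ≤ 1 := by simpa using M.r_le_card hi'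
  rw [← insert_eq] at hsub
  omega

lemma r_insert_eq_succ_of_not_spans {i : α} {A : Finset α} (hi : i ∈ M.E) (hA : A ⊆ M.E)
    (h : ¬ M.Spans A i) : M.r (insert i A) = M.r A + 1 := by
  have := M.r_le_r_insert hi hA
  have := M.r_insert_le_succ hi hA
  unfold Spans at h
  omega

lemma r_insert_insert_add_le {i k : α} {L : Finset α} (hi : i ∈ M.E) (hk : k ∈ M.E)
    (hL : L ⊆ M.E) :
    M.r (insert i (insert k L)) + M.r L ≤ M.r (insert i L) + M.r (insert k L) := by
  have hsub := M.r_submod (insert_subset hi hL) (insert_subset hk hL)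
  have hL' : L ⊆ insert i L ∩ insert k L := subset_inter (subset_insert i L) (subset_insert k L)
  have := M.r_mono hL' (inter_subset_left.trans (insert_subset hi hL))
  rw [insert_union, union_insert, union_self] at hsub
  omega

lemma Spans.mono {M : FinMatroid α} {S T : Finset α} {i : α} (h : M.Spans T i) (hTS : T ⊆ S)
    (hS : S ⊆ M.E) (hi : i ∈ M.E) : M.Spans S i := by
  have hsub := M.r_submod (insert_subset hi (hTS.trans hS)) hS
  have hT : T ⊆ insert i T ∩ S := subset_inter (subset_insert i T) hTS
  have := M.r_mono hT (inter_subset_right.trans hS)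
  have := M.r_le_r_insert hi hS
  rw [insert_union, union_eq_right.2 hTS] at hsub
  unfold Spans at h ⊢
  omega

lemma ci_iff_spans {i k : α} {L : Finset α} (hi : i ∈ M.E) (hk : k ∈ M.E) (hL : L ⊆ M.E) :
    M.CI i k L ↔ (M.Spans (insert k L) i → M.Spans L i) := by
  have := M.r_insert_insert_add_le hi hk hL
  have := M.r_le_r_insert hi hL
  have := M.r_insert_le_succ hi hL
  have := M.r_le_r_insert hi (insert_subset hk hL)
  unfold CI Spans
  omega

lemma not_spans_empty (hM : M.Loopless) {i : α} (hi : i ∈ M.E) : ¬ M.Spans ∅ i := by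
  simp [Spans, hM i hi, M.r_empty]

lemma spans_singleton_iff_parallel (hM : M.Loopless) {i j : α} (hi : i ∈ M.E) (hj : j ∈ M.E) :
    M.Spans {j} i ↔ M.Parallel i j := by
  have := M.r_le_r_insert hi (singleton_subset_iff.2 hj)
  unfold Spans Parallel
  rw [hM j hj] at *
  exact ⟨fun h => ⟨hi, hj, h.le⟩, fun h => by omega⟩

lemma parallel_refl {i : α} (hi : i ∈ M.E) : M.Parallel i i :=
  ⟨hi, hi, by simpa using M.r_le_card (singleton_subset_iff.2 hi)⟩

lemma Parallel.symm {M : FinMatroid α} {i j : α} (h : M.Parallel i j) : M.Parallel j i :=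
  ⟨h.2.1, h.1, by rw [pair_comm]; exact h.2.2⟩

lemma Parallel.trans {M : FinMatroid α} (hM : M.Loopless) {i j k : α} (hij : M.Parallel i j)
    (hjk : M.Parallel j k) : M.Parallel i k := by
  obtain ⟨hi, hj, hij⟩ := hij
  have hk := hjk.2.1
  have hijE : {i, j} ⊆ M.E := insert_subset hi (singleton_subset_iff.2 hj)
  have hspan : M.Spans {i, j} k :=
    ((M.spans_singleton_iff_parallel hM hk hj).2 hjk.symm).mono (by simp) hijE hk
  have hik : M.r {i, k} ≤ M.r (insert k {i, j}) :=
    M.r_mono (by intro a; simp; tauto) (insert_subset hk hijE)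
  exact ⟨hi, hk, hik.trans (hspan ▸ hij)⟩

lemma eq_of_parallel_of_intAx (hM : M.Loopless) (hInt : IntAx M.E (fun i j K => M.CI i j K))
    {x y z : α} (hxy : M.Parallel x y) (hxz : M.Parallel x z) (hxy' : x ≠ y) (hxz' : x ≠ z) :
    y = z := by
  by_contra hyz
  have hx := hxy.1
  have hy := hxy.2.1
  have hz := hxz.2.1
  have hsxy : M.Spans {y} x := (M.spans_singleton_iff_parallel hM hx hy).2 hxy
  have hsxz : M.Spans {z} x := (M.spans_singleton_iff_parallel hM hx hz).2 hxz
  have hwf : wf3 M.E x y z ∅ :=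
    ⟨hx, hy, hz, hxy', hxz', hyz, notMem_empty x, notMem_empty y, notMem_empty z,
      empty_subset _⟩
  have h₁ : M.CI x y (insert z ∅) :=
    (M.ci_iff_spans hx hy (by simpa using hz)).2 fun _ => by simpa using hsxz
  have h₂ : M.CI x z (insert y ∅) :=
    (M.ci_iff_spans hx hz (by simpa using hy)).2 fun _ => by simpa using hsxy
  exact M.not_spans_empty hM hx <|
    (M.ci_iff_spans hx hy (empty_subset _)).1 (hInt x y z ∅ hwf h₁ h₂).1 (by simpa using hsxy)

lemma spans_erase_of_compAx (hComp : CompAx M.E (fun i j K => M.CI i j K)) {S : Finset α}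
    {i k k' : α} (hS : S ⊆ M.E) (hi : i ∈ M.E) (hiS : i ∉ S) (hk : k ∈ S) (hk' : k' ∈ S)
    (hkk' : k ≠ k') (h : M.Spans S i) : M.Spans (S.erase k) i ∨ M.Spans (S.erase k') i := by
  by_contra! hne
  set L := (S.erase k).erase k' with hLdef
  have hL : L ⊆ M.E := (erase_subset _ _).trans ((erase_subset _ _).trans hS)
  have hk'L : insert k' L = S.erase k := insert_erase (mem_erase.2 ⟨hkk'.symm, hk'⟩)
  have hkL : insert k L = S.erase k' := by
    rw [hLdef, erase_right_comm]; exact insert_erase (mem_erase.2 ⟨hkk', hk⟩)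
  have hwf : wf3 M.E i k k' L := by
    refine ⟨hi, hS hk, hS hk', ?_, ?_, hkk', ?_, ?_, ?_, hL⟩ <;> grind
  have hik : M.CI i k L := (M.ci_iff_spans hi (hS hk) hL).2 fun h' => (hne.2 (hkL ▸ h')).elim
  have hik' : M.CI i k' L := (M.ci_iff_spans hi (hS hk') hL).2 fun h' => (hne.1 (hk'L ▸ h')).elim
  have hcomp : M.CI i k (S.erase k) := hk'L ▸ (hComp i k k' L hwf hik hik').1
  rw [M.ci_iff_spans hi (hS hk) ((erase_subset _ _).trans hS), insert_erase hk] at hcomp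
  exact hne.1 (hcomp h)

lemma exists_parallel_of_spans (hM : M.Loopless) (hComp : CompAx M.E (fun i j K => M.CI i j K))
    {i : α} (hi : i ∈ M.E) {S : Finset α} (hS : S ⊆ M.E) (hiS : i ∉ S) (h : M.Spans S i) :
    ∃ j ∈ S, M.Parallel i j := by
  induction S using Finset.strongInduction with
  | H S ih =>
  rcases Nat.lt_or_ge 1 S.card with hcard | hcard
  · obtain ⟨k, hk, k', hk', hkk'⟩ := one_lt_card.1 hcard
    have of_erase {l : α} (hl : l ∈ S) (hl' : M.Spans (S.erase l) i) :
        ∃ j ∈ S, M.Parallel i j := by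
      obtain ⟨j, hj, hij⟩ := ih _ (erase_ssubset hl) ((erase_subset _ _).trans hS)
        (fun h' => hiS (mem_of_mem_erase h')) hl'
      exact ⟨j, mem_of_mem_erase hj, hij⟩
    rcases M.spans_erase_of_compAx hComp hS hi hiS hk hk' hkk' h with h' | h'
    · exact of_erase hk h'
    · exact of_erase hk' h'
  · rcases Nat.le_one_iff_eq_zero_or_eq_one.1 hcard with h0 | h1
    · rw [card_eq_zero.1 h0] at h
      exact (M.not_spans_empty hM hi h).elim
    · obtain ⟨j, rfl⟩ := card_eq_one.1 h1
      have hj : j ∈ M.E := singleton_subset_iff.1 hS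
      exact ⟨j, mem_singleton_self j, (M.spans_singleton_iff_parallel hM hi hj).1 h⟩

lemma spans_iff_exists_parallel (hM : M.Loopless) (hComp : CompAx M.E (fun i j K => M.CI i j K))
    {i : α} (hi : i ∈ M.E) {S : Finset α} (hS : S ⊆ M.E) (hiS : i ∉ S) :
    M.Spans S i ↔ ∃ j ∈ S, M.Parallel i j := by
  refine ⟨M.exists_parallel_of_spans hM hComp hi hS hiS, ?_⟩
  rintro ⟨j, hj, hij⟩
  exact ((M.spans_singleton_iff_parallel hM hi (hS hj)).2 hij).mono
    (singleton_subset_iff.2 hj) hS hi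

def parallelClass (i : α) : Finset α := M.E.filter (M.Parallel i)

def parallelClasses : Finset (Finset α) := M.E.image M.parallelClass

lemma mem_parallelClass {i j : α} : j ∈ M.parallelClass i ↔ M.Parallel i j := by
  simpa [parallelClass] using fun h => h.2.1

lemma parallelClass_subset (i : α) : M.parallelClass i ⊆ M.E := filter_subset _ _

lemma mem_parallelClass_self {i : α} (hi : i ∈ M.E) : i ∈ M.parallelClass i :=
  (M.mem_parallelClass).2 (M.parallel_refl hi)

lemma eq_parallelClass_of_mem (hM : M.Loopless) {b : Finset α} (hb : b ∈ M.parallelClasses)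
    {i : α} (hib : i ∈ b) : b = M.parallelClass i := by
  obtain ⟨x, -, rfl⟩ := mem_image.1 hb
  have hxi := (M.mem_parallelClass).1 hib
  ext j
  simp only [mem_parallelClass]
  exact ⟨hxi.symm.trans hM, hxi.trans hM⟩

lemma parallelClasses_pairwiseDisjoint (hM : M.Loopless) :
    (M.parallelClasses : Set (Finset α)).PairwiseDisjoint id := by
  intro b₁ hb₁ b₂ hb₂ hne
  refine disjoint_left.2 fun i hi₁ hi₂ => hne ?_
  rw [M.eq_parallelClass_of_mem hM hb₁ hi₁, M.eq_parallelClass_of_mem hM hb₂ hi₂]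

lemma biUnion_parallelClasses : M.parallelClasses.biUnion id = M.E := by
  ext i
  simp only [mem_biUnion, parallelClasses, mem_image, id]
  refine ⟨fun ⟨_, ⟨x, _, rfl⟩, hi⟩ => M.parallelClass_subset x hi, fun hi => ?_⟩
  exact ⟨_, ⟨i, hi, rfl⟩, M.mem_parallelClass_self hi⟩

lemma card_parallelClass_le_two (hM : M.Loopless) (hInt : IntAx M.E (fun i j K => M.CI i j K))
    (i : α) : (M.parallelClass i).card ≤ 2 := by
  by_contra! h
  obtain ⟨x, hx, y, hy, z, hz, hxy, hxz, hyz⟩ := two_lt_card.1 h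
  simp only [mem_parallelClass] at hx hy hz
  exact hyz (M.eq_of_parallel_of_intAx hM hInt (hx.symm.trans hM hy) (hx.symm.trans hM hz) hxy hxz)

lemma r_eq_card_parallelClasses_filter (hM : M.Loopless)
    (hComp : CompAx M.E (fun i j K => M.CI i j K)) {S : Finset α} (hS : S ⊆ M.E) :
    M.r S = (M.parallelClasses.filter fun b => (b ∩ S).Nonempty).card := by
  induction S using Finset.induction_on with
  | empty => simp [M.r_empty]
  | insert i S hiS ih =>
    have hi : i ∈ M.E := hS (mem_insert_self i S)
    have hS' : S ⊆ M.E := (subset_insert i S).trans hS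
    have hmeet : (M.parallelClass i ∩ S).Nonempty ↔ M.Spans S i := by
      rw [M.spans_iff_exists_parallel hM hComp hi hS' hiS]
      simp [Finset.Nonempty, mem_parallelClass, and_comm]
    rw [card_filter_inter_insert_nonempty (M.parallelClasses_pairwiseDisjoint hM)
      (mem_image_of_mem _ hi) (M.mem_parallelClass_self hi), ← ih hS']
    by_cases h : M.Spans S i
    · rw [if_pos (hmeet.2 h)]
      exact h
    · rw [if_neg (mt hmeet.1 h)]
      exact M.r_insert_eq_succ_of_not_spans hi hS' h

section RankFormula

variable {B : Finset (Finset α)} (hB : (B : Set (Finset α)).PairwiseDisjoint id)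
  (hr : ∀ S ⊆ M.E, M.r S = (B.filter fun b => (b ∩ S).Nonempty).card)
include hB hr

lemma spans_iff_inter_nonempty_of_r_eq {b : Finset α} (hb : b ∈ B) {i : α} (hib : i ∈ b)
    (hi : i ∈ M.E) {S : Finset α} (hS : S ⊆ M.E) : M.Spans S i ↔ (b ∩ S).Nonempty := by
  unfold Spans
  rw [hr _ (insert_subset hi hS), hr S hS, card_filter_inter_insert_nonempty hB hb hib]
  split_ifs with h <;> simp [h]

lemma ci_iff_not_mem_of_r_eq (hcard : ∀ b ∈ B, b.card ≤ 2) {b : Finset α} (hb : b ∈ B)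
    {i j : α} {K : Finset α} (hib : i ∈ b) (hi : i ∈ M.E) (hj : j ∈ M.E) (hij : i ≠ j)
    (hiK : i ∉ K) (hjK : j ∉ K) (hK : K ⊆ M.E) : M.CI i j K ↔ j ∉ b := by
  rw [M.ci_iff_spans hi hj hK, M.spans_iff_inter_nonempty_of_r_eq hB hr hb hib hi hK,
    M.spans_iff_inter_nonempty_of_r_eq hB hr hb hib hi (insert_subset hj hK)]
  by_cases hjb : j ∈ b
  · have hb2 : b = {i, j} :=
      (eq_of_subset_of_card_le (insert_subset hib (singleton_subset_iff.2 hjb))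
        (by rw [card_pair hij]; exact hcard b hb)).symm
    have hbK : ¬ (b ∩ K).Nonempty := by
      rintro ⟨x, hx⟩
      rw [hb2, mem_inter, mem_insert, mem_singleton] at hx
      rcases hx with ⟨rfl | rfl, hxK⟩ <;> contradiction
    simp [hbK, hjb, inter_insert_of_mem hjb]
  · simp [hjb, inter_insert_of_notMem hjb]

end RankFormula

end FinMatroid

/-- for a loopless matroid `M`, the CI-structure `[[M]]` is a
gaussoid (satisfies (SG), (Int), (Comp), (WT)) iff `M` is isomorphic to a
direct sum of copies of `U_{1,1}` and `U_{1,2}`, i.e. iff the ground set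
partitions into blocks of size 1 or 2 such that the rank of any `S ⊆ E` is
the number of blocks meeting `S`. -/
theorem matroid_gaussoid_iff {α : Type*} [DecidableEq α] (M : FinMatroid α)
    (hM : M.Loopless) :
    (SGax M.E (fun i j K => M.CI i j K) ∧ IntAx M.E (fun i j K => M.CI i j K) ∧
      CompAx M.E (fun i j K => M.CI i j K) ∧ WTAx M.E (fun i j K => M.CI i j K)) ↔
    (∃ B : Finset (Finset α),
      (∀ b ∈ B, b ⊆ M.E) ∧
      (∀ b₁ ∈ B, ∀ b₂ ∈ B, b₁ ≠ b₂ → Disjoint b₁ b₂) ∧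
      B.biUnion id = M.E ∧
      (∀ b ∈ B, b.card = 1 ∨ b.card = 2) ∧
      (∀ S ⊆ M.E, M.r S = (B.filter (fun b => (b ∩ S).Nonempty)).card)) := by
  constructor
  · rintro ⟨-, hInt, hComp, -⟩
    refine ⟨M.parallelClasses, ?_,
      fun b₁ h₁ b₂ h₂ => M.parallelClasses_pairwiseDisjoint hM h₁ h₂,
      M.biUnion_parallelClasses, ?_,
      fun S hS => M.r_eq_card_parallelClasses_filter hM hComp hS⟩
    all_goals
      rintro _ hb
      obtain ⟨i, hi, rfl⟩ := mem_image.1 hb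
    · exact M.parallelClass_subset i
    · have := card_pos.2 ⟨i, M.mem_parallelClass_self hi⟩
      have := M.card_parallelClass_le_two hM hInt i
      omega
  · rintro ⟨B, -, hdisj, hcover, hcard, hr⟩
    have hB : (B : Set (Finset α)).PairwiseDisjoint id :=
      fun b₁ h₁ b₂ h₂ => hdisj b₁ h₁ b₂ h₂
    refine gaussoid_of_iff_not_rel (R := fun i j => ∃ b ∈ B, i ∈ b ∧ j ∈ b) ?_ ?_
    · rintro i j k ⟨b, hb, hib, hkb⟩ ⟨b', hb', hjb', hkb'⟩
      exact ⟨b, hb, hib, hB.elim_finset hb hb' k hkb hkb' ▸ hjb'⟩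
    · rintro i j K ⟨hi, hj, hij, hiK, hjK, hK⟩
      obtain ⟨b, hb, hib⟩ : ∃ b ∈ B, i ∈ b := by simpa [← hcover] using hi
      rw [M.ci_iff_not_mem_of_r_eq hB hr (fun b hb => by have := hcard b hb; omega) hb hib
        hi hj hij hiK hjK hK]
      exact ⟨fun hjb ⟨b', hb', hib', hjb'⟩ => hjb (hB.elim_finset hb' hb i hib' hib ▸ hjb'),
        fun h hjb => h ⟨b, hb, hib, hjb⟩⟩
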